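/- arXiv:0711.1850 — 3 statements merged into one kernel-verified Lean document; each statement's English description precedes it below -/
import Mathlib

section
/- Let Q be the mod-2 intersection matrix of a weighted tree Γ and let v be a leaf of Γ with even weight, attached to the vertex w. Let Γ' be the tree obtained by deleting v and w. Then the corank over ℤ/2 of the intersection matrix of Γ' equals the corank over ℤ/2 of Q. -/
/-!
Suppose row and column `v` of a square matrix `Q` are both the unit vector at `w ≠ v`. For
`Q y = 0`, equation `v` reads `y w = 0`, and equation `w` then solves for `y v` in terms of the
coordinates off `{v, w}`; the remaining equations are exactly those of the principal submatrix
on the complement of `{v, w}`. So restriction of vectors is an isomorphism between the two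
kernels. The mod-2 intersection matrix has this shape at an even-weight leaf `v` with
neighbour `w`: its `(v, v)` entry vanishes and its only other nonzero entry in row `v` is the
`1` at `w`.
-/

open Matrix

section PairComplement

variable {ι R : Type*} [Fintype ι] [DecidableEq ι] {v w : ι}

theorem Fintype.sum_eq_add_add_sum_subtype_ne_and_ne [AddCommMonoid R] (hvw : v ≠ w)
    (f : ι → R) : ∑ j, f j = f v + f w + ∑ j : {j // j ≠ v ∧ j ≠ w}, f j := by
  rw [← Finset.sum_add_sum_compl {v, w} f, Finset.sum_pair hvw]
  congr 1
  exact Finset.sum_subtype _ (by simp) f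

namespace Matrix

theorem mulVec_apply_eq_add_add_sum [CommSemiring R] (hvw : v ≠ w)
    (Q : Matrix ι ι R) (y : ι → R) (i : ι) :
    (Q *ᵥ y) i = Q i v * y v + Q i w * y w + ∑ j : {j // j ≠ v ∧ j ≠ w}, Q i j * y j :=
  Fintype.sum_eq_add_add_sum_subtype_ne_and_ne hvw _

variable (v w) in
def deletePair (Q : Matrix ι ι R) : Matrix {j // j ≠ v ∧ j ≠ w} {j // j ≠ v ∧ j ≠ w} R :=
  Q.submatrix Subtype.val Subtype.val

variable [CommRing R] {Q : Matrix ι ι R}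

theorem mulVec_apply_of_row_eq_single (hrow : Q v = Pi.single w 1) (y : ι → R) :
    (Q *ᵥ y) v = y w := by
  rw [mulVec, hrow, single_dotProduct, one_mul]

theorem mulVec_apply_of_col_eq_single (hvw : v ≠ w) (hcol : Qᵀ v = Pi.single w 1) (y : ι → R) :
    (Q *ᵥ y) w = y v + Q w w * y w + ∑ j : {j // j ≠ v ∧ j ≠ w}, Q w j * y j := by
  rw [mulVec_apply_eq_add_add_sum hvw, ← transpose_apply Q v w, hcol, Pi.single_eq_same, one_mul]

theorem mulVec_apply_subtype_of_col_eq_single (hvw : v ≠ w) (hcol : Qᵀ v = Pi.single w 1)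
    (y : ι → R) (i : {j // j ≠ v ∧ j ≠ w}) :
    (Q *ᵥ y) i = Q i w * y w + (Q.deletePair v w *ᵥ fun j ↦ y j) i := by
  rw [mulVec_apply_eq_add_add_sum hvw, ← transpose_apply Q v i, hcol,
    Pi.single_eq_of_ne i.2.2, zero_mul, zero_add]
  rfl

variable (hvw : v ≠ w) (hrow : Q v = Pi.single w 1) (hcol : Qᵀ v = Pi.single w 1)
include hvw hrow hcol

theorem deletePair_mulVec_eq_zero_of_mulVec_eq_zero {y : ι → R} (hy : Q *ᵥ y = 0) :
    Q.deletePair v w *ᵥ (fun j ↦ y j) = 0 := by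
  have hyw : y w = 0 := by rw [← mulVec_apply_of_row_eq_single hrow y, hy, Pi.zero_apply]
  funext i
  have := mulVec_apply_subtype_of_col_eq_single hvw hcol y i
  rwa [hy, hyw, mul_zero, zero_add, Pi.zero_apply, eq_comm] at this

theorem eq_zero_of_mulVec_eq_zero_of_forall_ne_and_ne {y : ι → R} (hy : Q *ᵥ y = 0)
    (hy₀ : ∀ j, j ≠ v ∧ j ≠ w → y j = 0) : y = 0 := by
  have hyw : y w = 0 := by rw [← mulVec_apply_of_row_eq_single hrow y, hy, Pi.zero_apply]
  have hyv : y v = 0 := by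
    have := mulVec_apply_of_col_eq_single hvw hcol y
    simpa [hy, hyw, fun j : {j // j ≠ v ∧ j ≠ w} ↦ hy₀ j j.2, eq_comm] using this
  funext j
  by_cases hjv : j = v
  · rw [hjv, hyv, Pi.zero_apply]
  by_cases hjw : j = w
  · rw [hjw, hyw, Pi.zero_apply]
  exact hy₀ j ⟨hjv, hjw⟩

theorem exists_mulVec_eq_zero_of_deletePair_mulVec_eq_zero {x : {j // j ≠ v ∧ j ≠ w} → R}
    (hx : Q.deletePair v w *ᵥ x = 0) :
    ∃ y : ι → R, Q *ᵥ y = 0 ∧ (fun j : {j // j ≠ v ∧ j ≠ w} ↦ y j) = x := by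
  set c := ∑ j : {j // j ≠ v ∧ j ≠ w}, Q w j * x j
  let y : ι → R := fun j ↦ if h : j ≠ v ∧ j ≠ w then x ⟨j, h⟩ else if j = v then -c else 0
  have hyv : y v = -c := by simp [y]
  have hyw : y w = 0 := by simp [y, hvw.symm]
  have hrestrict : (fun j : {j // j ≠ v ∧ j ≠ w} ↦ y j) = x := by
    funext j
    simp [y, j.2]
  refine ⟨y, ?_, hrestrict⟩
  funext i
  by_cases hiv : i = v
  · rw [hiv, mulVec_apply_of_row_eq_single hrow, hyw, Pi.zero_apply]
  by_cases hiw : i = w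
  · have hsum : ∑ j : {j // j ≠ v ∧ j ≠ w}, Q w j * y j = c := by simp only [c, ← hrestrict]
    rw [hiw, mulVec_apply_of_col_eq_single hvw hcol, hyv, hyw, hsum, Pi.zero_apply]
    ring
  · rw [mulVec_apply_subtype_of_col_eq_single hvw hcol y ⟨i, hiv, hiw⟩, hrestrict, hx]
    simp [hyw]

noncomputable def kerToLin'EquivKerToLin'DeletePair :
    LinearMap.ker (toLin' Q) ≃ₗ[R] LinearMap.ker (toLin' (Q.deletePair v w)) :=
  LinearEquiv.ofBijective
    ((LinearMap.funLeft R R Subtype.val).restrict fun _ hy ↦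
      deletePair_mulVec_eq_zero_of_mulVec_eq_zero hvw hrow hcol hy)
    ⟨(injective_iff_map_eq_zero _).2 fun y hy ↦ Subtype.ext <|
        eq_zero_of_mulVec_eq_zero_of_forall_ne_and_ne hvw hrow hcol y.2 fun j hj ↦
          congrFun (congrArg Subtype.val hy) ⟨j, hj⟩,
      fun x ↦
        let ⟨y, hy, hyx⟩ := exists_mulVec_eq_zero_of_deletePair_mulVec_eq_zero hvw hrow hcol x.2
        ⟨⟨y, hy⟩, Subtype.ext hyx⟩⟩

end Matrix

end PairComplement

namespace SimpleGraph

variable {V R : Type*} [DecidableEq V] (G : SimpleGraph V) [DecidableRel G.Adj]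

/-- The intersection form of the plumbing along `G`, with `d i` the weight of vertex `i`. -/
def intersectionMatrix [Zero R] [One R] (d : V → R) : Matrix V V R :=
  fun i j ↦ if i = j then d i else if G.Adj i j then 1 else 0

theorem intersectionMatrix_isSymm [Zero R] [One R] (d : V → R) :
    (G.intersectionMatrix d).IsSymm := by
  ext i j
  by_cases hij : i = j
  · rw [hij, transpose_apply]
  · simp [intersectionMatrix, hij, Ne.symm hij, G.adj_comm]

theorem intersectionMatrix_apply_eq_single_of_degree_eq_one [Zero R] [One R] {d : V → R}
    {v w : V} [Fintype (G.neighborSet v)] (hleaf : G.degree v = 1) (hadj : G.Adj v w)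
    (hd : d v = 0) : G.intersectionMatrix d v = Pi.single w 1 := by
  funext j
  by_cases hjw : j = w
  · simp [intersectionMatrix, hjw, hadj.ne, hadj]
  rw [Pi.single_eq_of_ne hjw]
  by_cases hvj : v = j
  · simp [intersectionMatrix, ← hvj, hd]
  have hnadj : ¬ G.Adj v j := fun hj ↦
    hjw ((degree_eq_one_iff_existsUnique_adj.1 hleaf).unique hj hadj)
  simp [intersectionMatrix, hvj, hnadj]

end SimpleGraph

theorem stmt1_general (n : ℕ) (G : SimpleGraph (Fin n)) [DecidableRel G.Adj]
    (wt : Fin n → ℤ) (v w : Fin n)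
    (hleaf : G.degree v = 1) (hadj : G.Adj v w) (heven : Even (wt v)) :
    Module.finrank (ZMod 2) (LinearMap.ker (Matrix.toLin'
      (fun i j : {i : Fin n // i ≠ v ∧ i ≠ w} =>
        if (i : Fin n) = (j : Fin n) then ((wt i : ZMod 2))
        else if G.Adj (i : Fin n) (j : Fin n) then 1 else 0))) =
    Module.finrank (ZMod 2) (LinearMap.ker (Matrix.toLin'
      (fun i j : Fin n =>
        if i = j then ((wt i : ZMod 2)) else if G.Adj i j then 1 else 0))) := by
  have hrow := G.intersectionMatrix_apply_eq_single_of_degree_eq_one hleaf hadj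
    (d := fun i ↦ (wt i : ZMod 2)) heven.intCast_zmod_two
  have hcol : (G.intersectionMatrix fun i ↦ (wt i : ZMod 2))ᵀ v = Pi.single w 1 := by
    rw [(G.intersectionMatrix_isSymm _).eq, hrow]
  exact (kerToLin'EquivKerToLin'DeletePair hadj.ne hrow hcol).symm.finrank_eq

/-- Neumann's Move 1 (deleting an even-weight leaf `v` together with its
neighbor `w`) preserves the corank over ℤ/2 of the mod-2 intersection matrix of a
weighted tree. -/
theorem stmt1 (n : ℕ) (G : SimpleGraph (Fin n)) [DecidableRel G.Adj] (hG : G.IsTree)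
    (wt : Fin n → ℤ) (v w : Fin n)
    (hleaf : G.degree v = 1) (hadj : G.Adj v w) (heven : Even (wt v)) :
    Module.finrank (ZMod 2) (LinearMap.ker (Matrix.toLin'
      (fun i j : {i : Fin n // i ≠ v ∧ i ≠ w} =>
        if (i : Fin n) = (j : Fin n) then ((wt i : ZMod 2))
        else if G.Adj (i : Fin n) (j : Fin n) then 1 else 0))) =
    Module.finrank (ZMod 2) (LinearMap.ker (Matrix.toLin'
      (fun i j : Fin n =>
        if i = j then ((wt i : ZMod 2)) else if G.Adj i j then 1 else 0))) :=
  stmt1_general n G wt v w hleaf hadj heven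
end

section
/- Let Q be the mod-2 intersection matrix of a weighted tree Γ and let v be a leaf of Γ with odd weight, attached to the vertex w. Let Γ' be the tree obtained by deleting v and changing the parity of the weight of w. Then the corank over ℤ/2 of the intersection matrix of Γ' equals the corank over ℤ/2 of Q. -/
/-!
The leaf row of `Q` is `e_v + e_w` with pivot `Q v v = 1`. For any matrix with an invertible
diagonal pivot, forgetting the pivot coordinate is an isomorphism from the kernel of the matrix
onto the kernel of its Schur complement `Q i j - Q i v (Q v v)⁻¹ Q v j`: the pivot row determines
the forgotten coordinate. At the leaf the correction term `Q i v Q v j` is nonzero only at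
`i = j = w`, so over `ℤ/2` the Schur complement is exactly the intersection matrix of `Γ'`.
-/

open Module LinearMap

namespace Matrix

variable {K ι : Type*} [Field K] [Fintype ι] [DecidableEq ι]

def schurComplementAt (Q : Matrix ι ι K) (v : ι) : Matrix {i // i ≠ v} {i // i ≠ v} K :=
  fun i j => Q i j - Q i v * (Q v v)⁻¹ * Q v j

theorem mulVec_apply_eq_add_sum_subtype_ne (Q : Matrix ι ι K) (y : ι → K) (i v : ι) :
    (Q *ᵥ y) i = Q i v * y v + ∑ j : {j // j ≠ v}, Q i j * y j :=
  Fintype.sum_eq_add_sum_subtype_ne _ v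

theorem mulVec_apply_eq_schurComplementAt_mulVec (Q : Matrix ι ι K) {v : ι} (hv : Q v v ≠ 0)
    (y : ι → K) (i : {i // i ≠ v}) :
    (Q *ᵥ y) i = (Q.schurComplementAt v *ᵥ fun j => y j) i + Q i v * (Q v v)⁻¹ * (Q *ᵥ y) v := by
  rw [mulVec_apply_eq_add_sum_subtype_ne Q y i v, mulVec_apply_eq_add_sum_subtype_ne Q y v v,
    mulVec, dotProduct]
  simp only [schurComplementAt, sub_mul, Finset.sum_sub_distrib, mul_add, Finset.mul_sum]
  field_simp
  ring

theorem eq_zero_of_mulVec_apply_eq_zero_of_forall_ne (Q : Matrix ι ι K) {v : ι} (hv : Q v v ≠ 0)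
    {y : ι → K} (hQy : (Q *ᵥ y) v = 0) (hy : ∀ i : {i // i ≠ v}, y i = 0) : y = 0 := by
  have hyv : y v = 0 := by
    rw [Q.mulVec_apply_eq_add_sum_subtype_ne y v v] at hQy
    simp only [hy, mul_zero, Finset.sum_const_zero, add_zero] at hQy
    exact (mul_eq_zero.mp hQy).resolve_left hv
  ext i
  by_cases hi : i = v
  · exact hi ▸ hyv
  · exact hy ⟨i, hi⟩

theorem exists_mulVec_eq_zero_of_schurComplementAt_mulVec_eq_zero (Q : Matrix ι ι K) {v : ι}
    (hv : Q v v ≠ 0) {x : {i // i ≠ v} → K} (hx : Q.schurComplementAt v *ᵥ x = 0) :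
    ∃ y : ι → K, Q *ᵥ y = 0 ∧ (fun j : {j // j ≠ v} => y j) = x := by
  let y : ι → K := fun i =>
    if h : i = v then -(Q v v)⁻¹ * ∑ j : {j // j ≠ v}, Q v j * x j else x ⟨i, h⟩
  have hyx : (fun j : {j // j ≠ v} => y j) = x := funext fun j => dif_neg j.2
  have hyv : (Q *ᵥ y) v = 0 := by
    have hsum : ∑ j : {j // j ≠ v}, Q v j * y j = ∑ j : {j // j ≠ v}, Q v j * x j :=
      Finset.sum_congr rfl fun j _ => by rw [← hyx]
    rw [Q.mulVec_apply_eq_add_sum_subtype_ne y v v, hsum]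
    simp only [y, dite_true]
    field_simp
    ring
  refine ⟨y, ?_, hyx⟩
  ext i
  by_cases hi : i = v
  · exact hi ▸ hyv
  · simpa [hyv, hyx, hx] using Q.mulVec_apply_eq_schurComplementAt_mulVec hv y ⟨i, hi⟩

theorem finrank_ker_schurComplementAt (Q : Matrix ι ι K) {v : ι} (hv : Q v v ≠ 0) :
    finrank K (ker (toLin' (Q.schurComplementAt v))) = finrank K (ker (toLin' Q)) := by
  let restrict : ker (toLin' Q) →ₗ[K] ker (toLin' (Q.schurComplementAt v)) :=
    ((funLeft K K Subtype.val).comp (ker (toLin' Q)).subtype).codRestrict _ fun y => by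
      have hy : Q *ᵥ y = 0 := y.2
      ext i
      simpa [hy, funLeft, Function.comp_def] using
        (Q.mulVec_apply_eq_schurComplementAt_mulVec hv y i).symm
  have hinj : Function.Injective restrict := by
    refine (injective_iff_map_eq_zero restrict).mpr fun y hy => Subtype.ext ?_
    have hQy : Q *ᵥ (y : ι → K) = 0 := y.2
    exact Q.eq_zero_of_mulVec_apply_eq_zero_of_forall_ne hv (congr_fun hQy v)
      fun i => congr_fun (congrArg Subtype.val hy) i
  have hsurj : Function.Surjective restrict := fun ⟨x, hx⟩ =>
    have ⟨y, hy, hyx⟩ := Q.exists_mulVec_eq_zero_of_schurComplementAt_mulVec_eq_zero hv hx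
    ⟨⟨y, hy⟩, Subtype.ext hyx⟩
  exact (LinearEquiv.ofBijective restrict ⟨hinj, hsurj⟩).finrank_eq.symm

end Matrix

theorem SimpleGraph.adj_iff_eq_of_degree_eq_one {V : Type*} {G : SimpleGraph V} {v w u : V}
    [Fintype (G.neighborSet v)] (hv : G.degree v = 1) (hw : G.Adj v w) :
    G.Adj v u ↔ u = w := by
  obtain ⟨w', -, huniq⟩ := G.degree_eq_one_iff_existsUnique_adj.mp hv
  exact ⟨fun hu => (huniq u hu).trans (huniq w hw).symm, fun hu => hu ▸ hw⟩

theorem stmt2_general (n : ℕ) (G : SimpleGraph (Fin n)) [DecidableRel G.Adj]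
    (wt : Fin n → ℤ) (v w : Fin n)
    (hleaf : G.degree v = 1) (hadj : G.Adj v w) (hodd : Odd (wt v)) :
    Module.finrank (ZMod 2) (LinearMap.ker (Matrix.toLin'
      (fun i j : {i : Fin n // i ≠ v} =>
        if (i : Fin n) = (j : Fin n) then
          ((wt i : ZMod 2) + if (i : Fin n) = w then 1 else 0)
        else if G.Adj (i : Fin n) (j : Fin n) then 1 else 0))) =
    Module.finrank (ZMod 2) (LinearMap.ker (Matrix.toLin'
      (fun i j : Fin n =>
        if i = j then ((wt i : ZMod 2)) else if G.Adj i j then 1 else 0))) := by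
  have hnbr (u : Fin n) : G.Adj u v ↔ u = w :=
    G.adj_comm u v |>.trans <| G.adj_iff_eq_of_degree_eq_one hleaf hadj
  have hwt : (wt v : ZMod 2) = 1 := ZMod.intCast_eq_one_iff_odd.mpr hodd
  set Q : Matrix (Fin n) (Fin n) (ZMod 2) :=
    fun i j => if i = j then (wt i : ZMod 2) else if G.Adj i j then 1 else 0
  refine .trans (congrArg (fun M => finrank (ZMod 2) (ker (Matrix.toLin' M))) ?_)
    (Q.finrank_ker_schurComplementAt (v := v) (by simp [Q, hwt]))
  funext i j
  simp only [Q, Matrix.schurComplementAt, hwt, i.2, j.2.symm, G.adj_comm v, hnbr]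
  split_ifs <;> simp_all [CharTwo.sub_eq_add]

/-- Neumann's Move 2 (deleting an odd-weight leaf `v` and flipping the
parity of the weight of its neighbor `w`) preserves the corank over ℤ/2 of the mod-2
intersection matrix of a weighted tree. -/
theorem stmt2 (n : ℕ) (G : SimpleGraph (Fin n)) [DecidableRel G.Adj] (hG : G.IsTree)
    (wt : Fin n → ℤ) (v w : Fin n)
    (hleaf : G.degree v = 1) (hadj : G.Adj v w) (hodd : Odd (wt v)) :
    Module.finrank (ZMod 2) (LinearMap.ker (Matrix.toLin'
      (fun i j : {i : Fin n // i ≠ v} =>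
        if (i : Fin n) = (j : Fin n) then
          ((wt i : ZMod 2) + if (i : Fin n) = w then 1 else 0)
        else if G.Adj (i : Fin n) (j : Fin n) then 1 else 0))) =
    Module.finrank (ZMod 2) (LinearMap.ker (Matrix.toLin'
      (fun i j : Fin n =>
        if i = j then ((wt i : ZMod 2)) else if G.Adj i j then 1 else 0))) :=
  stmt2_general n G wt v w hleaf hadj hodd
end

section
/- Let Γ be a weighted tree with intersection matrix Q and let S be a Wu set, i.e., a subset of vertices whose characteristic vector x ∈ (ℤ/2)^n satisfies Qx ≡ diag(Q) mod 2, and suppose all weights satisfy n_i ≤ -2 and every vertex v_i satisfies n_i + d_i ≤ 1 where d_i is its degree. Then no two vertices of S are adjacent in Γ. -/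
/-- In a weighted tree with all weights ≤ −2 and `n_i + d_i ≤ 1` at
every vertex, no two vertices of a Wu set are adjacent. -/
theorem stmt5 (n : ℕ) (G : SimpleGraph (Fin n)) [DecidableRel G.Adj] (hG : G.IsTree)
    (wt : Fin n → ℤ) (Q : Matrix (Fin n) (Fin n) ℤ)
    (hQ : ∀ i j, Q i j = if i = j then wt i else if G.Adj i j then 1 else 0)
    (hw : ∀ i, wt i ≤ -2) (hdeg : ∀ i, wt i + (G.degree i : ℤ) ≤ 1)
    (S : Finset (Fin n))
    (hWu : (Q.map (Int.cast : ℤ → ZMod 2)).mulVec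
        (fun i => if i ∈ S then 1 else 0) = fun i => ((Q i i : ZMod 2))) :
    ∀ i ∈ S, ∀ j ∈ S, ¬ G.Adj i j := by
  intro i hi j hj hadj
  -- Step 1: parity. For every `v ∈ S`, the number of `S`-neighbours of `v` is even.
  have parity : ∀ v ∈ S, 2 ∣ (S.filter (fun w => G.Adj v w)).card := by
    intro v hv
    have h1 : (Q.map (Int.cast : ℤ → ZMod 2)).mulVec
        (fun i => if i ∈ S then 1 else 0) v = ((Q v v : ZMod 2)) := congrFun hWu v
    have h2 : (Q.map (Int.cast : ℤ → ZMod 2)).mulVec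
        (fun i => if i ∈ S then 1 else 0) v
        = ∑ w ∈ S, ((Q v w : ZMod 2)) := by
      rw [Matrix.mulVec]
      simp only [dotProduct, Matrix.map_apply, mul_ite, mul_one, mul_zero]
      rw [Finset.sum_ite_mem, Finset.univ_inter]
    have h3 : ∑ w ∈ S, ((Q v w : ZMod 2))
        = (Q v v : ZMod 2) + ∑ w ∈ S.erase v, ((Q v w : ZMod 2)) :=
      (Finset.add_sum_erase S _ hv).symm
    have h4 : ∑ w ∈ S.erase v, ((Q v w : ZMod 2))
        = ((S.filter (fun w => G.Adj v w)).card : ZMod 2) := by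
      have : ∑ w ∈ S.erase v, ((Q v w : ZMod 2))
          = ∑ w ∈ S.erase v, (if G.Adj v w then (1 : ZMod 2) else 0) := by
        apply Finset.sum_congr rfl
        intro w hwS
        have hne : v ≠ w := fun h => (Finset.ne_of_mem_erase hwS) h.symm
        rw [hQ v w, if_neg hne]
        by_cases h : G.Adj v w <;> simp [h]
      rw [this, Finset.sum_boole]
      congr 1
      rw [Finset.filter_erase]
      rw [Finset.erase_eq_of_notMem]
      simp [G.irrefl]
    have : ((S.filter (fun w => G.Adj v w)).card : ZMod 2) = 0 := by
      have := h1
      rw [h2, h3, h4] at this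
      have h5 : (Q v v : ZMod 2) + ((S.filter (fun w => G.Adj v w)).card : ZMod 2)
          - (Q v v : ZMod 2) = (Q v v : ZMod 2) - (Q v v : ZMod 2) := by rw [this]
      simpa using h5
    exact (ZMod.natCast_eq_zero_iff _ 2).mp this
  -- Step 2: every vertex of `S` with an `S`-neighbour has a second `S`-neighbour.
  have two_nbrs : ∀ v ∈ S, ∀ w ∈ S, G.Adj v w →
      ∃ w' ∈ S, G.Adj v w' ∧ w' ≠ w := by
    intro v hv w hw havw
    have hwmem : w ∈ S.filter (fun w => G.Adj v w) := Finset.mem_filter.mpr ⟨hw, havw⟩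
    have hcard : 2 ≤ (S.filter (fun w => G.Adj v w)).card := by
      obtain ⟨k, hk⟩ := parity v hv
      have : 1 ≤ (S.filter (fun w => G.Adj v w)).card := Finset.card_pos.mpr ⟨w, hwmem⟩
      omega
    have : 0 < ((S.filter (fun w => G.Adj v w)).erase w).card := by
      rw [Finset.card_erase_of_mem hwmem]; omega
    obtain ⟨w', hw'⟩ := Finset.card_pos.mp this
    have hne := Finset.ne_of_mem_erase hw'
    have hw'' := Finset.mem_of_mem_erase hw'
    rw [Finset.mem_filter] at hw''
    exact ⟨w', hw''.1, hw''.2, hne⟩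
  -- Step 3: pick a vertex of `T` (vertices of `S` having an `S`-neighbour) farthest from `i`.
  classical
  set T : Finset (Fin n) :=
    Finset.univ.filter (fun v => v ∈ S ∧ ∃ w ∈ S, G.Adj v w) with hT
  have hiT : i ∈ T := by
    rw [hT, Finset.mem_filter]
    exact ⟨Finset.mem_univ _, hi, j, hj, hadj⟩
  obtain ⟨v, hvT, hmax⟩ := T.exists_max_image (fun v => G.dist i v) ⟨i, hiT⟩
  rw [hT, Finset.mem_filter] at hvT
  obtain ⟨-, hvS, w₁, hw₁S, hadj₁⟩ := hvT
  obtain ⟨w₂, hw₂S, hadj₂, hne⟩ := two_nbrs v hvS w₁ hw₁S hadj₁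
  have hconn := hG.isConnected
  -- both neighbours are in T, hence no farther from i than v
  have hdistle : ∀ w, w ∈ S → G.Adj v w → G.dist i w ≤ G.dist i v := by
    intro w hwS hvw
    apply hmax
    rw [hT, Finset.mem_filter]
    exact ⟨Finset.mem_univ _, hwS, v, hvS, hvw.symm⟩
  -- Step 4: for each such neighbour w, get a shortest path from i to w avoiding v,
  -- and turn it into a path from v to i starting with the edge v-w.
  have key : ∀ w, G.Adj v w → G.dist i w ≤ G.dist i v →
      ∃ q : G.Walk v i, q.IsPath ∧ q.support = v :: w :: q.support.tail.tail := by
    intro w hvw hdle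
    obtain ⟨p, hp, hplen⟩ := (hconn.preconnected i w).exists_path_of_dist
    have hvns : v ∉ p.support := by
      intro hvs
      have h1 : G.dist i v ≤ (p.takeUntil v hvs).length := G.dist_le _
      have h2 : G.dist v w ≤ (p.dropUntil v hvs).length := G.dist_le _
      have h3 : (p.takeUntil v hvs).length + (p.dropUntil v hvs).length = p.length := by
        have := congrArg SimpleGraph.Walk.length (p.take_spec hvs)
        rwa [SimpleGraph.Walk.length_append] at this
      have hvnw : v ≠ w := hvw.ne
      have hpos : 0 < G.dist v w :=
        (hvw.reachable).pos_dist_of_ne hvnw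
      omega
    refine ⟨SimpleGraph.Walk.cons hvw p.reverse, ?_, ?_⟩
    · apply SimpleGraph.Walk.IsPath.cons hp.reverse
      rwa [SimpleGraph.Walk.support_reverse, List.mem_reverse]
    · rw [SimpleGraph.Walk.support_cons]
      have : p.reverse.support = w :: p.reverse.support.tail :=
        p.reverse.support_eq_cons
      rw [this]
      simp
  obtain ⟨q₁, hq₁, hs₁⟩ := key w₁ hadj₁ (hdistle w₁ hw₁S hadj₁)
  obtain ⟨q₂, hq₂, hs₂⟩ := key w₂ hadj₂ (hdistle w₂ hw₂S hadj₂)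
  -- Step 5: uniqueness of paths in a tree forces w₁ = w₂, contradiction.
  have := hG.IsAcyclic.path_unique ⟨q₁, hq₁⟩ ⟨q₂, hq₂⟩
  have hqq : q₁ = q₂ := congrArg Subtype.val this
  apply hne
  have : q₂.support = q₁.support := by rw [hqq]
  rw [hs₁, hs₂] at this
  exact (List.cons.inj (List.cons.inj this).2).1
end
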